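/- A two-sided code is not an ND m-code: if X = {x₁,…,x_n} is a finite set of nonempty directed figures for which there exist non-negative integers α₁,…,α_n, not all zero, with Σᵢ αᵢτ(xᵢ) = (0,0), then for every associative merging function m the set X is not a numerically decipherable m-code. -/
import Mathlib


namespace DF

/-- A directed figure over alphabet `A`: a finitely-supported labelling of `ℤ²`
together with a start point and an end point. (Equality up to translation is
expressed by `EquivT` below.) -/
structure Fig (A : Type) where
  lab : ℤ × ℤ → Option A
  beg : ℤ × ℤ
  en : ℤ × ℤ
  finiteDom : Set.Finite {p : ℤ × ℤ | lab p ≠ none}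

variable {A : Type}

/-- The domain of a directed figure. -/
def Fig.dom (x : Fig A) : Set (ℤ × ℤ) := {p | x.lab p ≠ none}

/-- The translation vector of a directed figure. -/
def Fig.tv (x : Fig A) : ℤ × ℤ := x.en - x.beg

/-- A figure is nonempty if its domain is nonempty. -/
def Fig.NonEmpty (x : Fig A) : Prop := x.dom.Nonempty

/-- Translation of a directed figure by a vector `u`. -/
def trF (u : ℤ × ℤ) (x : Fig A) : Fig A where
  lab := fun p => x.lab (p - u)
  beg := x.beg + u
  en := x.en + u
  finiteDom := by
    apply (x.finiteDom.image (fun p => p + u)).subset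
    intro p hp
    exact ⟨p - u, hp, by simp⟩

/-- Equality of directed figures up to translation. -/
def EquivT (x y : Fig A) : Prop := ∃ u : ℤ × ℤ, trF u x = y

/-- Merging of two optional labels using merging function `m`. -/
def merge (m : A → A → A) : Option A → Option A → Option A
  | some a, some b => some (m a b)
  | some a, none => some a
  | none, b => b

/-- `m`-catenation of directed figures (always defined). -/
def mcat (m : A → A → A) (x y : Fig A) : Fig A where
  lab := fun p => merge m (x.lab p) (y.lab (p - (x.en - y.beg)))
  beg := x.beg
  en := y.en + (x.en - y.beg)
  finiteDom := by
    apply ((x.finiteDom).union ((y.finiteDom).image (fun p => p + (x.en - y.beg)))).subset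
    intro p hp
    simp only [Set.mem_union, Set.mem_setOf_eq, Set.mem_image]
    by_cases hx : x.lab p = none
    · right
      refine ⟨p - (x.en - y.beg), ?_, by simp⟩
      intro hy
      apply hp
      show merge m (x.lab p) (y.lab (p - (x.en - y.beg))) = none
      rw [hx, hy]; rfl
    · left; exact hx

/-- The underlying (total) operation of non-merging catenation; it represents
the actual catenation `x ∘ y` exactly when `CatDef x y` holds. -/
def cat (x y : Fig A) : Fig A := mcat (fun a _ => a) x y

/-- The non-merging catenation `x ∘ y` is defined iff the domain of `x` is disjoint
from the translated domain of `y`. -/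
def CatDef (x y : Fig A) : Prop :=
  Disjoint x.dom ((fun p => p + (x.en - y.beg)) '' y.dom)

/-- The empty directed figure ε. -/
def eps : Fig A :=
  { lab := fun _ => none, beg := 0, en := 0,
    finiteDom := by simp }

/-- Product (left-associated) of a list of figures under `m`-catenation. -/
def prodM (m : A → A → A) : List (Fig A) → Fig A
  | [] => eps
  | x :: l => l.foldl (mcat m) x

/-- Product (left-associated) of a list of figures under non-merging catenation. -/
def prodC : List (Fig A) → Fig A
  | [] => eps
  | x :: l => l.foldl cat x

/-- All successive catenations in `x ∘ y₁ ∘ y₂ ∘ ⋯` are defined. -/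
def ChainDef : Fig A → List (Fig A) → Prop
  | _, [] => True
  | x, y :: l => CatDef x y ∧ ChainDef (cat x y) l

/-- All catenations in the (left-associated) product of a list are defined. -/
def ProdDef : List (Fig A) → Prop
  | [] => True
  | x :: l => ChainDef x l

/-- Uniquely decipherable code (non-merging catenation). -/
def IsUDCode (X : Finset (Fig A)) : Prop :=
  ∀ xs ys : List (Fig A), xs ≠ [] → ys ≠ [] →
    (∀ a ∈ xs, a ∈ X) → (∀ a ∈ ys, a ∈ X) →
    ProdDef xs → ProdDef ys → EquivT (prodC xs) (prodC ys) → xs = ys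

/-- Multiset decipherable code (non-merging catenation). -/
def IsMSDCode (X : Finset (Fig A)) : Prop :=
  ∀ xs ys : List (Fig A), xs ≠ [] → ys ≠ [] →
    (∀ a ∈ xs, a ∈ X) → (∀ a ∈ ys, a ∈ X) →
    ProdDef xs → ProdDef ys → EquivT (prodC xs) (prodC ys) →
    (xs : Multiset (Fig A)) = (ys : Multiset (Fig A))

/-- Set decipherable code (non-merging catenation). -/
def IsSDCode (X : Finset (Fig A)) : Prop :=
  ∀ xs ys : List (Fig A), xs ≠ [] → ys ≠ [] →
    (∀ a ∈ xs, a ∈ X) → (∀ a ∈ ys, a ∈ X) →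
    ProdDef xs → ProdDef ys → EquivT (prodC xs) (prodC ys) →
    ∀ a : Fig A, a ∈ xs ↔ a ∈ ys

/-- Numerically decipherable code (non-merging catenation). -/
def IsNDCode (X : Finset (Fig A)) : Prop :=
  ∀ xs ys : List (Fig A), xs ≠ [] → ys ≠ [] →
    (∀ a ∈ xs, a ∈ X) → (∀ a ∈ ys, a ∈ X) →
    ProdDef xs → ProdDef ys → EquivT (prodC xs) (prodC ys) →
    xs.length = ys.length

/-- Uniquely decipherable `m`-code. -/
def IsUDmCode (m : A → A → A) (X : Finset (Fig A)) : Prop :=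
  ∀ xs ys : List (Fig A), xs ≠ [] → ys ≠ [] →
    (∀ a ∈ xs, a ∈ X) → (∀ a ∈ ys, a ∈ X) →
    EquivT (prodM m xs) (prodM m ys) → xs = ys

/-- Multiset decipherable `m`-code. -/
def IsMSDmCode (m : A → A → A) (X : Finset (Fig A)) : Prop :=
  ∀ xs ys : List (Fig A), xs ≠ [] → ys ≠ [] →
    (∀ a ∈ xs, a ∈ X) → (∀ a ∈ ys, a ∈ X) →
    EquivT (prodM m xs) (prodM m ys) →
    (xs : Multiset (Fig A)) = (ys : Multiset (Fig A))

/-- Set decipherable `m`-code. -/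
def IsSDmCode (m : A → A → A) (X : Finset (Fig A)) : Prop :=
  ∀ xs ys : List (Fig A), xs ≠ [] → ys ≠ [] →
    (∀ a ∈ xs, a ∈ X) → (∀ a ∈ ys, a ∈ X) →
    EquivT (prodM m xs) (prodM m ys) →
    ∀ a : Fig A, a ∈ xs ↔ a ∈ ys

/-- Numerically decipherable `m`-code. -/
def IsNDmCode (m : A → A → A) (X : Finset (Fig A)) : Prop :=
  ∀ xs ys : List (Fig A), xs ≠ [] → ys ≠ [] →
    (∀ a ∈ xs, a ∈ X) → (∀ a ∈ ys, a ∈ X) →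
    EquivT (prodM m xs) (prodM m ys) →
    xs.length = ys.length


section Aux

lemma Fig.ext' {x y : Fig A} (hl : x.lab = y.lab) (hb : x.beg = y.beg)
    (he : x.en = y.en) : x = y := by
  cases x; cases y; simp_all

lemma equivT_refl (x : Fig A) : EquivT x x := by
  refine ⟨0, Fig.ext' ?_ (by simp [trF]) (by simp [trF])⟩
  funext p; simp [trF]

lemma merge_eq_none (m : A → A → A) (a b : Option A) :
    merge m a b = none ↔ a = none ∧ b = none := by
  cases a <;> cases b <;> simp [merge]

lemma lab_eq_none_of_not_mem_dom {x : Fig A} {p : ℤ × ℤ} (h : p ∉ x.dom) :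
    x.lab p = none := by
  by_contra hc; exact h hc

lemma en_mcat (m : A → A → A) (x y : Fig A) : (mcat m x y).en = x.en + y.tv := by
  show y.en + (x.en - y.beg) = x.en + (y.en - y.beg); abel

lemma mem_trans_image (v : ℤ × ℤ) (D : Set (ℤ × ℤ)) (p : ℤ × ℤ) :
    p ∈ (fun q => q + v) '' D ↔ p - v ∈ D := by
  constructor
  · rintro ⟨q, hq, rfl⟩; simpa using hq
  · intro h; exact ⟨p - v, h, by simp⟩

lemma dom_mcat (m : A → A → A) (x y : Fig A) :
    (mcat m x y).dom = x.dom ∪ ((fun p => p + (x.en - y.beg)) '' y.dom) := by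
  ext p
  rw [Set.mem_union, mem_trans_image]
  show ¬ (merge m _ _ = none) ↔ _
  rw [merge_eq_none]
  show _ ↔ ¬ (x.lab p = none) ∨ ¬ _
  tauto

lemma beg_foldl (m : A → A → A) (s : Fig A) (l : List (Fig A)) :
    (List.foldl (mcat m) s l).beg = s.beg := by
  induction l generalizing s with
  | nil => rfl
  | cons y l ih => exact (ih (mcat m s y)).trans rfl

lemma en_foldl (m : A → A → A) (s : Fig A) (l : List (Fig A)) :
    (List.foldl (mcat m) s l).en = s.en + (l.map Fig.tv).sum := by
  induction l generalizing s with
  | nil => simp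
  | cons y l ih =>
    rw [List.foldl_cons, ih, en_mcat, List.map_cons, List.sum_cons, add_assoc]

/-- The translated domains accumulated while folding `mcat` starting at end
point `e` over a list. -/
def Dset : ℤ × ℤ → List (Fig A) → Set (ℤ × ℤ)
  | _, [] => ∅
  | e, y :: l => ((fun p => p + (e - y.beg)) '' y.dom) ∪ Dset (e + y.tv) l

lemma Dset_finite (e : ℤ × ℤ) (l : List (Fig A)) : (Dset e l).Finite := by
  induction l generalizing e with
  | nil => simp [Dset]
  | cons y l ih => exact (y.finiteDom.image _).union (ih _)

lemma dom_foldl (m : A → A → A) (s : Fig A) (l : List (Fig A)) :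
    (List.foldl (mcat m) s l).dom = s.dom ∪ Dset s.en l := by
  induction l generalizing s with
  | nil => simp [Dset]
  | cons y l ih =>
    rw [List.foldl_cons, ih, dom_mcat, en_mcat]
    rw [show Dset s.en (y :: l) =
      ((fun p => p + (s.en - y.beg)) '' y.dom) ∪ Dset (s.en + y.tv) l from rfl,
      Set.union_assoc]

lemma Dset_append (e : ℤ × ℤ) (l1 l2 : List (Fig A)) :
    Dset e (l1 ++ l2) = Dset e l1 ∪ Dset (e + (l1.map Fig.tv).sum) l2 := by
  induction l1 generalizing e with
  | nil => simp [Dset]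
  | cons y l ih =>
    rw [List.cons_append,
      show Dset e (y :: (l ++ l2)) =
        ((fun p => p + (e - y.beg)) '' y.dom) ∪ Dset (e + y.tv) (l ++ l2) from rfl,
      ih,
      show Dset e (y :: l) =
        ((fun p => p + (e - y.beg)) '' y.dom) ∪ Dset (e + y.tv) l from rfl,
      Set.union_assoc, List.map_cons, List.sum_cons, add_assoc]

lemma prodM_append (m : A → A → A) {l1 : List (Fig A)} (h : l1 ≠ [])
    (l2 : List (Fig A)) :
    prodM m (l1 ++ l2) = List.foldl (mcat m) (prodM m l1) l2 := by
  cases l1 with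
  | nil => exact absurd rfl h
  | cons x l => simp [prodM, List.foldl_append]

end Aux

/-- A two-sided code is not an ND `m`-code: if some nontrivial non-negative
integer combination of the translation vectors vanishes, then `X` is not
numerically decipherable with respect to any associative merging function. -/
theorem stmt7 {A : Type} [Finite A] (X : Finset (Fig A)) (hX : X.Nonempty)
    (hne : ∀ x ∈ X, Fig.NonEmpty x)
    (α : Fig A → ℕ) (hα : ∃ x ∈ X, α x ≠ 0)
    (hsum : ∑ x ∈ X, (α x) • x.tv = (0 : ℤ × ℤ))
    (m : A → A → A) (hm : ∀ a b c, m (m a b) c = m a (m b c)) :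
    ¬ IsNDmCode m X := by
  intro hND
  classical
  set L : List (Fig A) := X.toList.flatMap (fun x => List.replicate (α x) x) with hL
  obtain ⟨x0, hx0X, hx0⟩ := hα
  have hx0L : x0 ∈ L :=
    List.mem_flatMap.2 ⟨x0, Finset.mem_toList.2 hx0X, List.mem_replicate.2 ⟨hx0, rfl⟩⟩
  have hLne : L ≠ [] := List.ne_nil_of_mem hx0L
  have hLlen : L.length ≠ 0 := fun hc => hLne (List.eq_nil_of_length_eq_zero hc)
  have hmemL : ∀ a ∈ L, a ∈ X := by
    intro a ha
    obtain ⟨x, hx, ha⟩ := List.mem_flatMap.1 ha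
    rw [(List.mem_replicate.1 ha).2]
    exact Finset.mem_toList.1 hx
  have hsumL : (L.map Fig.tv).sum = 0 := by
    have key : ∀ s : List (Fig A),
        ((s.flatMap (fun x => List.replicate (α x) x)).map Fig.tv).sum
          = (s.map (fun x => (α x) • x.tv)).sum := by
      intro s
      induction s with
      | nil => rfl
      | cons y s ih =>
        simp only [List.flatMap_cons, List.map_append, List.sum_append, ih,
          List.map_replicate, List.sum_replicate, List.map_cons, List.sum_cons]
    rw [hL, key]
    rw [← hsum, Finset.sum, ← Multiset.sum_coe, ← Multiset.map_coe, Finset.coe_toList]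
  set z := prodM m L with hz
  set zs : ℕ → List (Fig A) := fun k => (List.replicate k L).flatten with hzs
  have hzscons : ∀ k, zs (k + 1) = L ++ zs k := by
    intro k
    simp only [hzs, List.replicate_succ, List.flatten_cons]
  have hzsum : ∀ k, ((zs k).map Fig.tv).sum = 0 := by
    intro k
    induction k with
    | zero => rfl
    | succ k ih => rw [hzscons, List.map_append, List.sum_append, hsumL, ih, add_zero]
  set P : ℕ → Fig A := fun k => List.foldl (mcat m) z (zs k) with hP
  have hPprod : ∀ k, P k = prodM m (zs (k + 1)) := by
    intro k
    rw [hzscons, prodM_append m hLne]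
  have hPbeg : ∀ k, (P k).beg = z.beg := fun k => beg_foldl m z (zs k)
  have hPen : ∀ k, (P k).en = z.en := by
    intro k
    rw [hP]
    show (List.foldl (mcat m) z (zs k)).en = z.en
    rw [en_foldl, hzsum, add_zero]
  set S : Set (ℤ × ℤ) := z.dom ∪ Dset z.en L with hS
  have hSfin : S.Finite := Set.Finite.union z.finiteDom (Dset_finite _ _)
  have hDsub : ∀ k, Dset z.en (zs k) ⊆ Dset z.en L := by
    intro k
    induction k with
    | zero => exact Set.empty_subset _
    | succ k ih =>
      rw [hzscons, Dset_append, hsumL, add_zero]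
      exact Set.union_subset (subset_refl _) ih
  have hPdom : ∀ k, (P k).dom ⊆ S := by
    intro k
    rw [hP]
    show (List.foldl (mcat m) z (zs k)).dom ⊆ S
    rw [dom_foldl]
    exact Set.union_subset Set.subset_union_left ((hDsub k).trans Set.subset_union_right)
  haveI : Finite ↥S := hSfin.to_subtype
  haveI := Fintype.ofFinite A
  haveI : Finite (↥S → Option A) := by infer_instance
  have key : ∃ k l : ℕ, k ≠ l ∧ P k = P l := by
    haveI : Finite {f : Fig A // f.beg = z.beg ∧ f.en = z.en ∧ f.dom ⊆ S} := by
      refine Finite.of_injective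
        (fun f : {f : Fig A // f.beg = z.beg ∧ f.en = z.en ∧ f.dom ⊆ S} =>
          fun p : S => f.1.lab p) ?_
      rintro ⟨f, hfb, hfe, hfd⟩ ⟨g, hgb, hge, hgd⟩ h
      simp only [Subtype.mk.injEq]
      refine Fig.ext' ?_ (hfb.trans hgb.symm) (hfe.trans hge.symm)
      funext p
      by_cases hp : p ∈ S
      · exact congrFun h ⟨p, hp⟩
      · rw [lab_eq_none_of_not_mem_dom (fun hc => hp (hfd hc)),
          lab_eq_none_of_not_mem_dom (fun hc => hp (hgd hc))]
    obtain ⟨k, l, hkl, h⟩ := Finite.exists_ne_map_eq_of_infinite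
      (fun k : ℕ => (⟨P k, hPbeg k, hPen k, hPdom k⟩ :
        {f : Fig A // f.beg = z.beg ∧ f.en = z.en ∧ f.dom ⊆ S}))
    exact ⟨k, l, hkl, congrArg Subtype.val h⟩
  obtain ⟨k, l, hkl, hPe⟩ := key
  have hzsne : ∀ n, zs (n + 1) ≠ [] := by
    intro n
    rw [hzscons]
    exact List.ne_nil_of_mem (List.mem_append_left _ hx0L)
  have hzsmem : ∀ n, ∀ a ∈ zs n, a ∈ X := by
    intro n a ha
    obtain ⟨l', hl', ha⟩ := List.mem_flatten.1 ha
    rw [List.eq_of_mem_replicate hl'] at ha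
    exact hmemL a ha
  have hlen : ∀ n, (zs n).length = n * L.length := by
    intro n
    induction n with
    | zero => simp [hzs]
    | succ n ih => rw [hzscons, List.length_append, ih]; ring
  have heq := hND (zs (k + 1)) (zs (l + 1)) (hzsne k) (hzsne l)
    (hzsmem (k + 1)) (hzsmem (l + 1))
    (by rw [← hPprod, ← hPprod, hPe]; exact equivT_refl _)
  rw [hlen, hlen] at heq
  have := Nat.eq_of_mul_eq_mul_right (Nat.pos_of_ne_zero hLlen) heq
  exact hkl (by omega)

end DF
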